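/- (Conservativity over minimal logic) For every formula A of the language L⊥ (built from propositional variables and ⊥ using ∧, ∨, → only, with no occurrence of ⊃): if ⊢_{⊥w} A in the system S⊥w, then ⊢_j A in Johansson's minimal propositional logic MPC. -/

import Mathlib

/-- Formulas of the language L_{⊥,⊃}. -/
inductive Formula : Type
  | var : ℕ → Formula
  | bot : Formula
  | and : Formula → Formula → Formula
  | or  : Formula → Formula → Formula
  | imp : Formula → Formula → Formula
  | sup : Formula → Formula → Formula

/-- Formulas of the ⊃-free language L⊥ of minimal logic. -/
inductive MFormula : Type
  | var : ℕ → MFormula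
  | bot : MFormula
  | and : MFormula → MFormula → MFormula
  | or  : MFormula → MFormula → MFormula
  | imp : MFormula → MFormula → MFormula

/-- The inclusion of L⊥ into L_{⊥,⊃}. -/
def MFormula.toF : MFormula → Formula
  | .var p => .var p
  | .bot => .bot
  | .and A B => .and A.toF B.toF
  | .or A B => .or A.toF B.toF
  | .imp A B => .imp A.toF B.toF

/-- Theoremhood ⊢_{⊥w} in the Hilbert system S⊥w. -/
inductive WDeriv : Formula → Prop
  | ax1 (A B : Formula) : WDeriv (A.imp (B.imp A))
  | ax2 (A B C : Formula) :
      WDeriv ((A.imp (B.imp C)).imp ((A.imp B).imp (A.imp C)))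
  | ax3 (A B : Formula) : WDeriv ((A.and B).imp A)
  | ax4 (A B : Formula) : WDeriv ((A.and B).imp B)
  | ax5 (A B C : Formula) :
      WDeriv ((C.imp A).imp ((C.imp B).imp (C.imp (A.and B))))
  | ax6 (A B : Formula) : WDeriv (A.imp (A.or B))
  | ax7 (A B : Formula) : WDeriv (B.imp (A.or B))
  | ax8 (A B C : Formula) :
      WDeriv ((A.imp C).imp ((B.imp C).imp ((A.or B).imp C)))
  | axM1 (A B : Formula) : WDeriv ((A.imp B).sup (A.sup B))
  | axM2 (A B C : Formula) :
      WDeriv ((A.sup (B.sup C)).imp ((A.sup B).sup (A.sup C)))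
  | axM3 (A B C : Formula) :
      WDeriv ((A.sup (B.imp C)).imp (B.imp (A.sup C)))
  | axM4 (A B C : Formula) :
      WDeriv ((A.imp (B.sup C)).imp (B.sup (A.imp C)))
  | axM5 (A B C : Formula) :
      WDeriv (((A.sup B).sup C).imp ((A.sup C).imp C))
  | axM6 (A B C : Formula) :
      WDeriv ((A.sup C).imp ((B.sup C).imp ((A.or B).sup C)))
  | axE (A : Formula) : WDeriv (Formula.bot.sup A)
  | mp {A B} : WDeriv A → WDeriv (A.sup B) → WDeriv B

/-- Theoremhood ⊢_j in Johansson's minimal propositional logic MPC,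
given by (Ax1)–(Ax8) and modus ponens for → in the language L⊥. -/
inductive MDeriv : MFormula → Prop
  | ax1 (A B : MFormula) : MDeriv (A.imp (B.imp A))
  | ax2 (A B C : MFormula) :
      MDeriv ((A.imp (B.imp C)).imp ((A.imp B).imp (A.imp C)))
  | ax3 (A B : MFormula) : MDeriv ((A.and B).imp A)
  | ax4 (A B : MFormula) : MDeriv ((A.and B).imp B)
  | ax5 (A B C : MFormula) :
      MDeriv ((C.imp A).imp ((C.imp B).imp (C.imp (A.and B))))
  | ax6 (A B : MFormula) : MDeriv (A.imp (A.or B))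
  | ax7 (A B : MFormula) : MDeriv (B.imp (A.or B))
  | ax8 (A B C : MFormula) :
      MDeriv ((A.imp C).imp ((B.imp C).imp ((A.or B).imp C)))
  | mp {A B} : MDeriv A → MDeriv (A.imp B) → MDeriv B


/-!
If `A` is not a theorem of minimal logic, Lindenbaum's lemma (via Zorn) gives a prime theory `Δ`
omitting `A`. The prime theories, ordered by inclusion, form the canonical Kripke model of minimal
logic, in which `⊥` is an ordinary persistent atom. Adjoining below them a root at which nothing
holds gives a rooted model; read `B ⊃ C` at `w` as "`C` holds at `w` if `B` holds at the root".
`S⊥w` is sound for rooted models in which `⊥` fails at the root: the axioms for `⊃` only use that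
the root lies below every world and that truth at the root is a fixed fact. So `A` holds at the
root, hence at `Δ`, contradicting the truth lemma `Δ ⊩ B ↔ B ∈ Δ`.
-/

theorem MDeriv.imp_self (A : MFormula) : MDeriv (A.imp A) :=
  (MDeriv.ax1 A A).mp ((MDeriv.ax1 A (A.imp A)).mp (MDeriv.ax2 A (A.imp A) A))

inductive MDerivFrom (Γ : Set MFormula) : MFormula → Prop
  | hyp {A} : A ∈ Γ → MDerivFrom Γ A
  | thm {A} : MDeriv A → MDerivFrom Γ A
  | mp {A B} : MDerivFrom Γ A → MDerivFrom Γ (A.imp B) → MDerivFrom Γ B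

namespace MDerivFrom

variable {Γ Δ : Set MFormula} {A B : MFormula}

theorem mono (hΓΔ : Γ ⊆ Δ) (h : MDerivFrom Γ A) : MDerivFrom Δ A := by
  induction h with
  | hyp h => exact hyp (hΓΔ h)
  | thm h => exact thm h
  | mp _ _ ihA ihAB => exact ihA.mp ihAB

theorem toMDeriv (h : MDerivFrom ∅ A) : MDeriv A := by
  induction h with
  | hyp h => exact absurd h (Set.notMem_empty _)
  | thm h => exact h
  | mp _ _ ihA ihAB => exact ihA.mp ihAB

theorem deduction (h : MDerivFrom (insert A Γ) B) : MDerivFrom Γ (A.imp B) := by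
  induction h with
  | @hyp B h =>
    rcases h with rfl | h
    · exact thm (MDeriv.imp_self _)
    · exact (hyp h).mp (thm (MDeriv.ax1 B A))
  | @thm B h => exact (thm h).mp (thm (MDeriv.ax1 B A))
  | @mp C B _ _ ihC ihCB => exact ihC.mp (ihCB.mp (thm (MDeriv.ax2 A C B)))

theorem cut (hA : MDerivFrom Γ A) (h : MDerivFrom (insert A Γ) B) : MDerivFrom Γ B :=
  hA.mp h.deduction

theorem exists_mem_of_sUnion {c : Set (Set MFormula)} (hc : IsChain (· ⊆ ·) c)
    (hne : c.Nonempty) (h : MDerivFrom (⋃₀ c) A) : ∃ Γ ∈ c, MDerivFrom Γ A := by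
  induction h with
  | hyp h =>
    obtain ⟨Γ, hΓ, hA⟩ := Set.mem_sUnion.1 h
    exact ⟨Γ, hΓ, hyp hA⟩
  | thm h => exact ⟨hne.some, hne.some_mem, thm h⟩
  | mp _ _ ihA ihAB =>
    obtain ⟨Γ₁, hΓ₁, hA⟩ := ihA
    obtain ⟨Γ₂, hΓ₂, hAB⟩ := ihAB
    rcases hc.total hΓ₁ hΓ₂ with h12 | h21
    · exact ⟨Γ₂, hΓ₂, (hA.mono h12).mp hAB⟩
    · exact ⟨Γ₁, hΓ₁, hA.mp (hAB.mono h21)⟩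

end MDerivFrom

structure IsPrimeTheory (Δ : Set MFormula) : Prop where
  mem_of_derivFrom : ∀ {A}, MDerivFrom Δ A → A ∈ Δ
  mem_or_mem : ∀ {A B}, A.or B ∈ Δ → A ∈ Δ ∨ B ∈ Δ

namespace IsPrimeTheory

variable {Δ : Set MFormula} {A B : MFormula}

theorem and_mem_iff (hΔ : IsPrimeTheory Δ) : A.and B ∈ Δ ↔ A ∈ Δ ∧ B ∈ Δ := by
  constructor
  · intro h
    exact ⟨hΔ.mem_of_derivFrom ((MDerivFrom.hyp h).mp (.thm (MDeriv.ax3 A B))),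
      hΔ.mem_of_derivFrom ((MDerivFrom.hyp h).mp (.thm (MDeriv.ax4 A B)))⟩
  · rintro ⟨hA, hB⟩
    have hAB : MDerivFrom Δ (A.imp B) := (MDerivFrom.hyp hB).mp (.thm (MDeriv.ax1 B A))
    have hpair : MDerivFrom Δ (A.imp (A.and B)) :=
      hAB.mp ((MDerivFrom.thm (MDeriv.imp_self A)).mp (.thm (MDeriv.ax5 A B A)))
    exact hΔ.mem_of_derivFrom ((MDerivFrom.hyp hA).mp hpair)

theorem or_mem_iff (hΔ : IsPrimeTheory Δ) : A.or B ∈ Δ ↔ A ∈ Δ ∨ B ∈ Δ := by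
  refine ⟨hΔ.mem_or_mem, ?_⟩
  rintro (h | h)
  · exact hΔ.mem_of_derivFrom ((MDerivFrom.hyp h).mp (.thm (MDeriv.ax6 A B)))
  · exact hΔ.mem_of_derivFrom ((MDerivFrom.hyp h).mp (.thm (MDeriv.ax7 A B)))

end IsPrimeTheory

theorem exists_isPrimeTheory_not_mem {Γ : Set MFormula} {A : MFormula}
    (hΓ : ¬ MDerivFrom Γ A) : ∃ Δ, Γ ⊆ Δ ∧ IsPrimeTheory Δ ∧ A ∉ Δ := by
  obtain ⟨Δ, hΓΔ, hmax⟩ := zorn_subset_nonempty {Δ | ¬ MDerivFrom Δ A}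
    (fun c hcS hc hne => ⟨⋃₀ c, fun h => by
      obtain ⟨Δ, hΔ, hA⟩ := MDerivFrom.exists_mem_of_sUnion hc hne h
      exact hcS hΔ hA, fun _ => Set.subset_sUnion_of_mem⟩) Γ hΓ
  have hΔA : ¬ MDerivFrom Δ A := hmax.prop
  have hinsert : ∀ {B}, B ∉ Δ → MDerivFrom (insert B Δ) A := fun hB => by
    by_contra h
    exact hB (hmax.eq_of_subset h (Set.subset_insert _ _) ▸ Set.mem_insert _ _)
  refine ⟨Δ, hΓΔ, ⟨fun {B} hB => ?_, fun {B C} hBC => ?_⟩, fun hA => hΔA (.hyp hA)⟩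
  · by_contra hBΔ
    exact hΔA (hB.cut (hinsert hBΔ))
  · by_contra! hBC'
    have hBA := (hinsert hBC'.1).deduction
    have hCA := (hinsert hBC'.2).deduction
    exact hΔA ((MDerivFrom.hyp hBC).mp (hCA.mp (hBA.mp (.thm (MDeriv.ax8 B C A)))))

/-- The root is the least element `⊥ : W`; the formula `Formula.bot` holds exactly on `falsum`. -/
structure RootedModel (W : Type*) [Preorder W] [OrderBot W] where
  val : ℕ → UpperSet W
  falsum : UpperSet W
  bot_notMem_falsum : (⊥ : W) ∉ falsum

namespace RootedModel

variable {W : Type*} [Preorder W] [OrderBot W] (M : RootedModel W)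

def Forces : W → Formula → Prop
  | w, .var p => w ∈ M.val p
  | w, .bot => w ∈ M.falsum
  | w, .and A B => Forces w A ∧ Forces w B
  | w, .or A B => Forces w A ∨ Forces w B
  | w, .imp A B => ∀ v, w ≤ v → Forces v A → Forces v B
  | w, .sup A B => Forces ⊥ A → Forces w B

variable {M}

theorem Forces.mono {A : Formula} {w v : W} (hwv : w ≤ v) (h : M.Forces w A) :
    M.Forces v A := by
  induction A generalizing w v with
  | var p => exact (M.val p).upper hwv h
  | bot => exact M.falsum.upper hwv h
  | and A B ihA ihB => exact ⟨ihA hwv h.1, ihB hwv h.2⟩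
  | or A B ihA ihB => exact h.imp (ihA hwv) (ihB hwv)
  | imp A B => exact fun u hvu => h u (hwv.trans hvu)
  | sup A B _ ihB => exact fun hA => ihB hwv (h hA)

end RootedModel

theorem WDeriv.forces {W : Type*} [Preorder W] [OrderBot W] {A : Formula} (h : WDeriv A)
    (M : RootedModel W) (w : W) : M.Forces w A := by
  induction h generalizing w with
  | ax1 A B => exact fun v _ hA u hvu _ => hA.mono hvu
  | ax2 A B C =>
    exact fun v _ hABC u hvu hAB t hut hA =>
      hABC t (hvu.trans hut) hA t le_rfl (hAB t hut hA)
  | ax3 A B => exact fun _ _ h => h.1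
  | ax4 A B => exact fun _ _ h => h.2
  | ax5 A B C =>
    exact fun v _ hCA u hvu hCB t hut hC => ⟨hCA t (hvu.trans hut) hC, hCB t hut hC⟩
  | ax6 A B => exact fun _ _ => Or.inl
  | ax7 A B => exact fun _ _ => Or.inr
  | ax8 A B C =>
    exact fun v _ hAC u hvu hBC t hut hAB =>
      hAB.elim (hAC t (hvu.trans hut)) (hBC t hut)
  | axM1 A B => exact fun hAB hA => (hAB ⊥ le_rfl hA).mono bot_le
  | axM2 A B C => exact fun _ _ hABC hAB hA => hABC hA (hAB hA)
  | axM3 A B C => exact fun _ _ hABC u hvu hB hA => hABC hA u hvu hB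
  | axM4 A B C => exact fun _ _ hABC hB u hvu hA => hABC u hvu hA hB
  | axM5 A B C =>
    intro v _ hABC u hvu hAC
    by_cases hA : M.Forces ⊥ A
    · exact hAC hA
    · exact (hABC fun hA' => absurd hA' hA).mono hvu
  | axM6 A B C =>
    intro v _ hAC u hvu hBC hAB
    exact hAB.elim (fun hA => (hAC hA).mono hvu) hBC
  | axE A => exact fun hbot => absurd hbot M.bot_notMem_falsum
  | mp _ _ ihA ihAB => exact ihAB w (ihA ⊥)

def PrimeTheory : Type := {Δ : Set MFormula // IsPrimeTheory Δ}

instance : PartialOrder PrimeTheory := Subtype.partialOrder _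

def PrimeTheory.memUpperSet (A : MFormula) : UpperSet (WithBot PrimeTheory) where
  carrier := {w | ∃ Δ : PrimeTheory, w = ↑Δ ∧ A ∈ Δ.1}
  upper' := by
    rintro _ v hwv ⟨Δ, rfl, hA⟩
    obtain ⟨Δ', rfl, hΔΔ'⟩ := WithBot.coe_le_iff.1 hwv
    exact ⟨Δ', rfl, hΔΔ' hA⟩

theorem PrimeTheory.mem_memUpperSet_coe {A : MFormula} {Δ : PrimeTheory} :
    (↑Δ : WithBot PrimeTheory) ∈ memUpperSet A ↔ A ∈ Δ.1 :=
  ⟨fun ⟨_, hΔ, hA⟩ => WithBot.coe_injective hΔ ▸ hA, fun hA => ⟨Δ, rfl, hA⟩⟩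

def canonicalModel : RootedModel (WithBot PrimeTheory) where
  val p := PrimeTheory.memUpperSet (.var p)
  falsum := PrimeTheory.memUpperSet .bot
  bot_notMem_falsum := fun ⟨_, h, _⟩ => WithBot.bot_ne_coe h

theorem canonicalModel_forces_coe_iff (A : MFormula) (Δ : PrimeTheory) :
    canonicalModel.Forces ↑Δ A.toF ↔ A ∈ Δ.1 := by
  induction A generalizing Δ with
  | var p => exact PrimeTheory.mem_memUpperSet_coe
  | bot => exact PrimeTheory.mem_memUpperSet_coe
  | and A B ihA ihB => exact (and_congr (ihA Δ) (ihB Δ)).trans Δ.2.and_mem_iff.symm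
  | or A B ihA ihB => exact (or_congr (ihA Δ) (ihB Δ)).trans Δ.2.or_mem_iff.symm
  | imp A B ihA ihB =>
    constructor
    · intro h
      by_contra hAB
      obtain ⟨Δ', hΔΔ', hΔ', hB⟩ :=
        exists_isPrimeTheory_not_mem fun hB => hAB (Δ.2.mem_of_derivFrom hB.deduction)
      let Θ : PrimeTheory := ⟨Δ', hΔ'⟩
      have hle : (Δ : WithBot PrimeTheory) ≤ Θ :=
        WithBot.coe_le_coe.2 ((Set.subset_insert _ _).trans hΔΔ')
      exact hB ((ihB Θ).1 (h Θ hle ((ihA Θ).2 (hΔΔ' (Set.mem_insert _ _)))))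
    · intro hAB v hv hA
      obtain ⟨Δ', rfl, hΔΔ'⟩ := WithBot.coe_le_iff.1 hv
      exact (ihB Δ').2 (Δ'.2.mem_of_derivFrom (.mp (.hyp ((ihA Δ').1 hA)) (.hyp (hΔΔ' hAB))))

/-- Conservativity of S⊥w over minimal logic: for A in L⊥,
if ⊢_{⊥w} A then ⊢_j A. -/
theorem conservative_over_minimal (A : MFormula)
    (h : WDeriv A.toF) : MDeriv A := by
  by_contra hA
  obtain ⟨Δ, -, hΔ, hAΔ⟩ :=
    exists_isPrimeTheory_not_mem (Γ := ∅) fun h' => hA h'.toMDeriv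
  exact hAΔ ((canonicalModel_forces_coe_iff A ⟨Δ, hΔ⟩).1 (h.forces canonicalModel _))
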